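/- Discarding supply is never optimal: Suppose f is continuous and strictly positive on [0,1]² and μ_A, μ_B > 0 with μ_A + μ_B ≤ 1. Let c_A > 0 and c_B ≥ 0 be such that the posted-ordeal mechanism M(c_A, c_B) is feasible, allocates good A to a set of positive F-measure, and has slack A-supply: F({y = A}) < μ_A. Then there exists ε ∈ (0, c_A) such that M(c_A − ε, c_B) is feasible and has strictly greater total welfare than M(c_A, c_B). -/

import Mathlib

/- Discarding supply is never optimal (Lemma 5). -/

open Set MeasureTheory

noncomputable section
open scoped Classical

inductive Good where
  | none : Good
  | A : Good
  | B : Good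
deriving DecidableEq

structure Mech where
  c : ℝ × ℝ → ℝ
  x : ℝ × ℝ → ℝ
  y : ℝ × ℝ → Good

def square : Set (ℝ × ℝ) := Icc (0:ℝ) 1 ×ˢ Icc (0:ℝ) 1

def Mech.util (M : Mech) (t r : ℝ × ℝ) : ℝ :=
  match M.y r with
  | Good.A => M.x r * t.1 - M.c r
  | Good.B => M.x r * t.2 - M.c r
  | Good.none => 0

def Mech.U (M : Mech) (t : ℝ × ℝ) : ℝ := M.util t t

def Fmeas (f : ℝ × ℝ → ℝ) (S : Set (ℝ × ℝ)) : ℝ := ∫ p in S ∩ square, f p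

def Mech.Valid (M : Mech) : Prop :=
  (∀ r, 0 ≤ M.c r) ∧ (∀ r, M.x r ∈ Icc (0:ℝ) 1)

def Mech.IC (M : Mech) : Prop :=
  ∀ t ∈ square, ∀ r ∈ square, M.util t r ≤ M.U t

def Mech.IR (M : Mech) : Prop :=
  ∀ t ∈ square, 0 ≤ M.U t

def Mech.Feasible (M : Mech) (f : ℝ × ℝ → ℝ) (muA muB : ℝ) : Prop :=
  M.Valid ∧ M.IC ∧ M.IR ∧
  Fmeas f {p | M.y p = Good.A} ≤ muA ∧ Fmeas f {p | M.y p = Good.B} ≤ muB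

/-- Total welfare of a mechanism. -/
def Mech.welfare (M : Mech) (f : ℝ × ℝ → ℝ) : ℝ :=
  ∫ p in square, M.U p * f p

/-- The posted-ordeal mechanism `M(c_A, c_B)`: undamaged goods with ordeals
`c_A` and `c_B`. -/
def posted (cA cB : ℝ) : Mech where
  c := fun p =>
    if max 0 (p.2 - cB) < p.1 - cA then cA
    else if max 0 (p.1 - cA) < p.2 - cB then cB
    else 0
  x := fun _ => 1
  y := fun p =>
    if max 0 (p.2 - cB) < p.1 - cA then Good.A
    else if max 0 (p.1 - cA) < p.2 - cB then Good.B
    else Good.none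

-- auxiliary lemmas
lemma sq_meas : MeasurableSet square :=
  (measurableSet_Icc).prod measurableSet_Icc

lemma sq_cpt : IsCompact square := isCompact_Icc.prod isCompact_Icc

lemma mem_sq {p : ℝ × ℝ} (hp : p ∈ square) :
    0 ≤ p.1 ∧ p.1 ≤ 1 ∧ 0 ≤ p.2 ∧ p.2 ≤ 1 :=
  ⟨hp.1.1, hp.1.2, hp.2.1, hp.2.2⟩

lemma posted_yA_cond {cA cB : ℝ} {p : ℝ × ℝ} :
    (posted cA cB).y p = Good.A ↔ max 0 (p.2 - cB) < p.1 - cA := by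
  simp only [posted]
  split_ifs with h1 h2 <;> simp [*]

lemma posted_yB_cond {cA cB : ℝ} {p : ℝ × ℝ} :
    (posted cA cB).y p = Good.B ↔
      (¬ max 0 (p.2 - cB) < p.1 - cA ∧ max 0 (p.1 - cA) < p.2 - cB) := by
  simp only [posted]
  split_ifs with h1 h2 <;> simp [*]

lemma posted_yA {cA cB : ℝ} (hcB : 1 ≤ cB) {p : ℝ × ℝ} (hp : p ∈ square) :
    ((posted cA cB).y p = Good.A ↔ cA < p.1) := by
  have h2 : p.2 - cB ≤ 0 := by have := (mem_sq hp).2.2.2; linarith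
  rw [posted_yA_cond, max_eq_left h2]
  constructor <;> intro h <;> linarith

lemma posted_yB {cA cB : ℝ} (hcB : 1 ≤ cB) {p : ℝ × ℝ} (hp : p ∈ square) :
    (posted cA cB).y p ≠ Good.B := by
  intro hB
  rw [posted_yB_cond] at hB
  obtain ⟨-, h⟩ := hB
  have h2 : p.2 - cB ≤ 0 := by have := (mem_sq hp).2.2.2; linarith
  have := le_max_left 0 (p.1 - cA)
  linarith

lemma posted_U {cA cB : ℝ} (hcB : 1 ≤ cB) {p : ℝ × ℝ} (hp : p ∈ square) :
    (posted cA cB).U p = max (p.1 - cA) 0 := by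
  have h2 : p.2 - cB ≤ 0 := by have := (mem_sq hp).2.2.2; linarith
  simp only [Mech.U, Mech.util, posted]
  split_ifs with h1 h3
  · rw [max_eq_left h2] at h1
    rw [max_eq_left (le_of_lt h1)]; ring
  · rw [max_eq_left h2] at h1
    have := le_max_left 0 (p.1 - cA); linarith
  · rw [max_eq_left h2] at h1
    rw [max_eq_right (by push_neg at h1; linarith)]

lemma posted_cA {cA cB : ℝ} {p : ℝ × ℝ} (h : (posted cA cB).y p = Good.A) :
    (posted cA cB).c p = cA := by
  rw [posted_yA_cond] at h
  simp only [posted, if_pos h]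

lemma posted_IC {cA cB : ℝ} (hcB : 1 ≤ cB) : (posted cA cB).IC := by
  intro t ht r hr
  rw [posted_U hcB ht]
  rcases hy : (posted cA cB).y r with _ | _ | _
  · simp [Mech.util, hy]
  · have hc := posted_cA hy
    have hx : (posted cA cB).x r = 1 := rfl
    simp only [Mech.util, hy, hx, hc]
    calc (1:ℝ) * t.1 - cA = t.1 - cA := by ring
      _ ≤ max (t.1 - cA) 0 := le_max_left _ _
  · exact absurd hy (posted_yB hcB hr)

lemma posted_IR {cA cB : ℝ} (hcB : 1 ≤ cB) : (posted cA cB).IR := by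
  intro t ht
  rw [posted_U hcB ht]
  exact le_max_right _ _

lemma posted_Valid {cA cB : ℝ} (hcA : 0 ≤ cA) (hcB : 0 ≤ cB) :
    (posted cA cB).Valid := by
  constructor
  · intro r; dsimp only [posted]; split_ifs <;> simp [hcA, hcB]
  · intro r; exact ⟨zero_le_one, le_refl 1⟩

lemma FmeasA_eq {cA cB : ℝ} (hcB : 1 ≤ cB) (f : ℝ × ℝ → ℝ) :
    Fmeas f {p | (posted cA cB).y p = Good.A} = ∫ p in {p : ℝ × ℝ | cA < p.1} ∩ square, f p := by
  unfold Fmeas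
  have hset : {p : ℝ × ℝ | (posted cA cB).y p = Good.A} ∩ square
      = {p : ℝ × ℝ | cA < p.1} ∩ square := by
    ext p
    constructor
    · rintro ⟨h, hp⟩; exact ⟨(posted_yA hcB hp).mp h, hp⟩
    · rintro ⟨h, hp⟩; exact ⟨(posted_yA hcB hp).mpr h, hp⟩
  rw [hset]

lemma FmeasB_eq {cA cB : ℝ} (hcB : 1 ≤ cB) (f : ℝ × ℝ → ℝ) :
    Fmeas f {p | (posted cA cB).y p = Good.B} = 0 := by
  unfold Fmeas
  have : {p : ℝ × ℝ | (posted cA cB).y p = Good.B} ∩ square = ∅ := by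
    ext p
    simp only [mem_inter_iff, mem_setOf_eq, mem_empty_iff_false, iff_false, not_and]
    intro h hp
    exact posted_yB hcB hp h
  rw [this, setIntegral_empty]

theorem discarding_supply_never_optimal
    (f : ℝ × ℝ → ℝ) (muA muB : ℝ)
    (hfc : ContinuousOn f square) (hfpos : ∀ p ∈ square, 0 < f p)
    (hprob : Fmeas f square = 1)
    (hmuA : 0 < muA) (hmuB : 0 < muB) (hmu : muA + muB ≤ 1)
    (cA cB : ℝ) (hcA : 0 < cA) (hcB : 0 ≤ cB)
    (hfeas : (posted cA cB).Feasible f muA muB)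
    (hposA : 0 < Fmeas f {p | (posted cA cB).y p = Good.A})
    (hslack : Fmeas f {p | (posted cA cB).y p = Good.A} < muA) :
    ∃ ε ∈ Ioo (0:ℝ) cA,
      (posted (cA - ε) cB).Feasible f muA muB ∧
      (posted cA cB).welfare f < (posted (cA - ε) cB).welfare f := by
  obtain ⟨hValid, hIC, hIR, hsA, hsB⟩ := hfeas
  -- a point in the A-region inside the square
  have hne : ({p | (posted cA cB).y p = Good.A} ∩ square).Nonempty := by
    rw [Set.nonempty_iff_ne_empty]
    intro h
    unfold Fmeas at hposA
    rw [h, setIntegral_empty] at hposA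
    exact lt_irrefl 0 hposA
  obtain ⟨p₀, hp₀A, hp₀sq⟩ := hne
  have hp₀A' : (posted cA cB).y p₀ = Good.A := hp₀A
  have hcond₀ : max 0 (p₀.2 - cB) < p₀.1 - cA := posted_yA_cond.mp hp₀A'
  have hcA1 : cA < 1 := by
    have h0 := le_max_left 0 (p₀.2 - cB)
    have := (mem_sq hp₀sq).2.1
    linarith
  -- IC forces cB ≥ 1
  have hcB1 : 1 ≤ cB := by
    by_contra hlt
    push_neg at hlt
    set s := min ((1 - cA)/2) ((1 - cB)/2) with hs
    have hs0 : 0 < s := lt_min (by linarith) (by linarith)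
    have hsA' : s ≤ (1 - cA)/2 := min_le_left _ _
    have hsB' : s ≤ (1 - cB)/2 := min_le_right _ _
    have htsq : ((cA + s, cB + s) : ℝ × ℝ) ∈ square := by
      refine ⟨⟨?_, ?_⟩, ?_, ?_⟩ <;> dsimp only <;> linarith
    have hmax : max 0 s = s := max_eq_right (le_of_lt hs0)
    have e1 : ((cA + s, cB + s) : ℝ × ℝ).1 - cA = s := by simp
    have e2 : ((cA + s, cB + s) : ℝ × ℝ).2 - cB = s := by simp
    have hyt : (posted cA cB).y (cA + s, cB + s) = Good.none := by
      show (if max 0 (((cA + s, cB + s) : ℝ × ℝ).2 - cB) < ((cA + s, cB + s) : ℝ × ℝ).1 - cA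
        then Good.A
        else if max 0 (((cA + s, cB + s) : ℝ × ℝ).1 - cA) < ((cA + s, cB + s) : ℝ × ℝ).2 - cB
        then Good.B else Good.none) = Good.none
      rw [e1, e2, hmax, if_neg (lt_irrefl s), if_neg (lt_irrefl s)]
    have hUt : (posted cA cB).U (cA + s, cB + s) = 0 := by
      simp only [Mech.U, Mech.util, hyt]
    have hICt := hIC (cA + s, cB + s) htsq p₀ hp₀sq
    rw [hUt] at hICt
    have hc₀ : (posted cA cB).c p₀ = cA := posted_cA hp₀A'
    have hx₀ : (posted cA cB).x p₀ = 1 := rfl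
    simp only [Mech.util, hp₀A', hc₀, hx₀] at hICt
    have he3 : (1:ℝ) * ((cA + s, cB + s) : ℝ × ℝ).1 - cA = s := by dsimp only; ring
    rw [he3] at hICt
    linarith
  -- quantities
  set FA := Fmeas f {p | (posted cA cB).y p = Good.A} with hFAdef
  have hδ : 0 < muA - FA := by simp only [hFAdef]; linarith
  obtain ⟨pm, hpm, hpmax⟩ := sq_cpt.exists_isMaxOn ⟨(0,0), ⟨⟨le_refl 0, zero_le_one⟩, ⟨le_refl 0, zero_le_one⟩⟩⟩ hfc
  rw [isMaxOn_iff] at hpmax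
  set Mb := f pm with hMbdef
  have hMb0 : 0 < Mb := hfpos pm hpm
  set ε := min (cA/2) ((muA - FA)/(2*Mb)) with hεdef
  have hε0 : 0 < ε := lt_min (by linarith) (by positivity)
  have hεcA : ε < cA := lt_of_le_of_lt (min_le_left _ _) (by linarith)
  have hεδ : Mb * ε ≤ (muA - FA)/2 := by
    have h1 : ε ≤ (muA - FA)/(2*Mb) := min_le_right _ _
    have h2 : Mb * ε ≤ Mb * ((muA - FA)/(2*Mb)) := mul_le_mul_of_nonneg_left h1 hMb0.le
    have h3 : Mb * ((muA - FA)/(2*Mb)) = (muA - FA)/2 := by field_simp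
    linarith
  -- integrability
  have hf_int : IntegrableOn f square := hfc.integrableOn_compact sq_cpt
  set S1 := {p : ℝ × ℝ | cA < p.1} ∩ square with hS1def
  set S2 := {p : ℝ × ℝ | cA - ε < p.1 ∧ p.1 ≤ cA} ∩ square with hS2def
  have hS1meas : MeasurableSet S1 :=
    ((isOpen_lt continuous_const continuous_fst).measurableSet).inter sq_meas
  have hS2meas : MeasurableSet S2 := by
    have he : {p : ℝ × ℝ | cA - ε < p.1 ∧ p.1 ≤ cA} = (fun p : ℝ × ℝ => p.1) ⁻¹' (Ioc (cA - ε) cA) := rfl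
    rw [hS2def, he]
    exact (measurable_fst measurableSet_Ioc).inter sq_meas
  have hint1 : IntegrableOn f S1 := hf_int.mono_set inter_subset_right
  have hint2 : IntegrableOn f S2 := hf_int.mono_set inter_subset_right
  have hFAeq : FA = ∫ p in S1, f p := FmeasA_eq hcB1 f
  -- split the new A-region
  have hTsplit : {p : ℝ × ℝ | cA - ε < p.1} ∩ square = S1 ∪ S2 := by
    ext p
    simp only [hS1def, hS2def, mem_inter_iff, mem_union, mem_setOf_eq]
    constructor
    · rintro ⟨h, hp⟩
      rcases le_or_gt p.1 cA with h' | h'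
      · exact Or.inr ⟨⟨h, h'⟩, hp⟩
      · exact Or.inl ⟨h', hp⟩
    · rintro (⟨h, hp⟩ | ⟨⟨h, -⟩, hp⟩) <;> exact ⟨by linarith, hp⟩
  have hdisj : Disjoint S1 S2 := by
    rw [Set.disjoint_left]
    rintro p ⟨h1, -⟩ ⟨⟨-, h2⟩, -⟩
    exact absurd h2 (not_le.mpr h1)
  -- bound the strip integral
  have hS2sub : S2 ⊆ Ioc (cA - ε) cA ×ˢ Icc (0:ℝ) 1 := by
    rintro p ⟨⟨h1, h2⟩, hp⟩
    exact ⟨⟨h1, h2⟩, hp.2⟩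
  have hvol : volume S2 ≤ ENNReal.ofReal ε := by
    calc volume S2 ≤ volume (Ioc (cA - ε) cA ×ˢ Icc (0:ℝ) 1) := measure_mono hS2sub
      _ = ENNReal.ofReal ε := by
          rw [show (volume : Measure (ℝ × ℝ)) = (volume : Measure ℝ).prod volume from rfl,
            Measure.prod_prod, Real.volume_Ioc, Real.volume_Icc]
          simp [show cA - (cA - ε) = ε by ring]
  have hfin : volume S2 < ⊤ := lt_of_le_of_lt hvol ENNReal.ofReal_lt_top
  have hvol' : (volume S2).toReal ≤ ε := by
    have := (ENNReal.toReal_le_toReal hfin.ne ENNReal.ofReal_ne_top).mpr hvol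
    rwa [ENNReal.toReal_ofReal hε0.le] at this
  have hS2bound : ∫ p in S2, f p ≤ Mb * ε := by
    have h1 : ∫ p in S2, f p ≤ ∫ _ in S2, Mb := by
      apply setIntegral_mono_on hint2 (integrableOn_const hfin.ne) hS2meas
      intro p hp
      exact hpmax p hp.2
    have h2 : ∫ _ in S2, (Mb : ℝ) = (volume S2).toReal * Mb := by
      rw [setIntegral_const, smul_eq_mul]; rfl
    have h3 : (volume S2).toReal * Mb ≤ ε * Mb := mul_le_mul_of_nonneg_right hvol' hMb0.le
    calc ∫ p in S2, f p ≤ (volume S2).toReal * Mb := by rw [← h2]; exact h1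
      _ ≤ ε * Mb := h3
      _ = Mb * ε := by ring
  -- supply constraints for the new mechanism
  have hsupplyA : Fmeas f {p | (posted (cA - ε) cB).y p = Good.A} ≤ muA := by
    rw [FmeasA_eq hcB1, hTsplit, setIntegral_union hdisj hS2meas hint1 hint2]
    have : ∫ p in S1, f p = FA := hFAeq.symm
    rw [this]
    linarith
  have hsupplyB : Fmeas f {p | (posted (cA - ε) cB).y p = Good.B} ≤ muB := by
    rw [FmeasB_eq hcB1]
    exact hmuB.le
  -- welfare
  have hWint : ∀ c' : ℝ, IntegrableOn (fun p : ℝ × ℝ => max (p.1 - c') 0 * f p) square :=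
    fun c' => (((continuous_fst.sub continuous_const).max continuous_const).continuousOn.mul hfc).integrableOn_compact sq_cpt
  have hW : ∀ c' : ℝ, (posted c' cB).welfare f = ∫ p in square, max (p.1 - c') 0 * f p := by
    intro c'
    unfold Mech.welfare
    exact setIntegral_congr_fun sq_meas fun p hp => by rw [posted_U hcB1 hp]
  set g : ℝ × ℝ → ℝ := fun p => max (p.1 - (cA - ε)) 0 * f p - max (p.1 - cA) 0 * f p with hgdef
  have hg_int : IntegrableOn g square := (hWint (cA - ε)).sub (hWint cA)
  have hg_nonneg : ∀ p ∈ square, 0 ≤ g p := by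
    intro p hp
    have hm : max (p.1 - cA) 0 ≤ max (p.1 - (cA - ε)) 0 :=
      max_le_max (by linarith) le_rfl
    have hf0 : 0 ≤ f p := (hfpos p hp).le
    simp only [hgdef, ← sub_mul]
    exact mul_nonneg (by linarith) hf0
  have hmono : ∫ p in S1, g p ≤ ∫ p in square, g p := by
    apply setIntegral_mono_set hg_int
    · exact (ae_restrict_iff' sq_meas).mpr (Filter.Eventually.of_forall hg_nonneg)
    · exact HasSubset.Subset.eventuallyLE inter_subset_right
  have hS1g : ∫ p in S1, g p = ε * FA := by
    have h1 : ∫ p in S1, g p = ∫ p in S1, ε * f p := by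
      apply setIntegral_congr_fun hS1meas
      intro p hp
      have h1' : cA < p.1 := hp.1
      simp only [hgdef]
      rw [max_eq_left (by linarith), max_eq_left (by linarith)]
      ring
    rw [h1, integral_const_mul, ← hFAeq]
  have hwelf : (posted cA cB).welfare f < (posted (cA - ε) cB).welfare f := by
    rw [hW cA, hW (cA - ε)]
    have hsub : (∫ p in square, max (p.1 - (cA - ε)) 0 * f p) - ∫ p in square, max (p.1 - cA) 0 * f p
        = ∫ p in square, (max (p.1 - (cA - ε)) 0 * f p - max (p.1 - cA) 0 * f p) := by
      exact (integral_sub (hWint (cA - ε)) (hWint cA)).symm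
    have hsub' : (∫ p in square, max (p.1 - (cA - ε)) 0 * f p) - ∫ p in square, max (p.1 - cA) 0 * f p
        = ∫ p in square, g p := hsub
    have hpos : 0 < ε * FA := mul_pos hε0 hposA
    linarith [hmono, hS1g, hsub']
  exact ⟨ε, ⟨hε0, hεcA⟩, ⟨posted_Valid (by linarith) hcB, posted_IC hcB1, posted_IR hcB1, hsupplyA, hsupplyB⟩, hwelf⟩
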